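/- arXiv:math-ph/0310001 — 2 statements merged into one kernel-verified Lean document; each statement's English description precedes it below -/
import Mathlib

section
/- For every γ ∈ [0,2) and every φ* ∈ (−π,π], the quantity D_k(φ*) is strictly positive for Lebesgue-almost every k ∈ [−π,π]². -/
open MeasureTheory Real Filter

noncomputable section
open scoped Classical

/-- The momentum-space box `[-π,π]²`. -/
def box : Set (ℝ × ℝ) := Set.Icc (-π) π ×ˢ Set.Icc (-π) π

/-- The spin-wave "symbol" `D_k(φ*)` for coupling ratio `γ`. -/
def D (γ φ : ℝ) (k : ℝ × ℝ) : ℝ :=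
  ‖1 - Complex.exp (Complex.I * ((k.1 : ℂ) + (k.2 : ℂ)))‖ ^ 2
    + ‖1 - Complex.exp (Complex.I * ((k.1 : ℂ) - (k.2 : ℂ)))‖ ^ 2
    + γ * Real.cos φ *
      (‖1 - Complex.exp (Complex.I * (k.1 : ℂ))‖ ^ 2
        - ‖1 - Complex.exp (Complex.I * (k.2 : ℂ))‖ ^ 2)

/-- The spin-wave free energy `F(φ*) = (1/2)∫_{[-π,π]²} log D_k(φ*) dk/(2π)²`. -/
def F (γ φ : ℝ) : ℝ := (1 / 2) * ((2 * π) ^ 2)⁻¹ * ∫ k in box, Real.log (D γ φ k)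

/-- The massive spin-wave free energy `F(φ*,λ)`. -/
def Fm (γ φ lam : ℝ) : ℝ :=
  (1 / 2) * ((2 * π) ^ 2)⁻¹ * ∫ k in box, Real.log (lam + D γ φ k)

lemma abs_one_sub_exp_sq (θ : ℝ) :
    ‖1 - Complex.exp (Complex.I * θ)‖ ^ 2 = 2 - 2 * Real.cos θ := by
  rw [Complex.sq_norm, mul_comm, Complex.exp_mul_I]
  simp [Complex.normSq_apply, Complex.cos_ofReal_re, Complex.sin_ofReal_re]
  nlinarith [Real.sin_sq_add_cos_sq θ]

lemma D_eq (γ φ : ℝ) (k : ℝ × ℝ) :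
    D γ φ k = (2 + γ * Real.cos φ) * (1 - Real.cos k.1) * (1 + Real.cos k.2)
      + (2 - γ * Real.cos φ) * (1 + Real.cos k.1) * (1 - Real.cos k.2) := by
  unfold D
  simp only [← Complex.ofReal_add, ← Complex.ofReal_sub, abs_one_sub_exp_sq]
  rw [Real.cos_add, Real.cos_sub]
  ring

/-- for `γ ∈ [0,2)` and `φ* ∈ (-π,π]`, `D_k(φ*) > 0` for Lebesgue-almost
every `k ∈ [-π,π]²`. -/
theorem D_pos_ae (γ : ℝ) (hγ0 : 0 ≤ γ) (hγ2 : γ < 2) (φs : ℝ)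
    (hφ : φs ∈ Set.Ioc (-π) π) :
    ∀ᵐ k ∂(volume.restrict box), 0 < D γ φs k := by
  have hbox : MeasurableSet box := measurableSet_Icc.prod measurableSet_Icc
  have hN : volume {k : ℝ × ℝ | k.1 = -π ∨ k.1 = 0 ∨ k.1 = π} = 0 := by
    have hset : {k : ℝ × ℝ | k.1 = -π ∨ k.1 = 0 ∨ k.1 = π}
        = ({-π, 0, π} : Set ℝ) ×ˢ (Set.univ : Set ℝ) := by
      ext k; simp [Set.mem_prod]
    rw [hset, Measure.volume_eq_prod, Measure.prod_prod,
      (Set.toFinite ({-π, 0, π} : Set ℝ)).measure_zero, zero_mul]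
  have h1 : ∀ᵐ k ∂(volume.restrict box), k.1 ≠ -π ∧ k.1 ≠ 0 ∧ k.1 ≠ π := by
    refine ae_restrict_of_ae ?_
    rw [ae_iff]
    convert hN using 2
    ext k; simp; tauto
  have h2 : ∀ᵐ k ∂(volume.restrict box), k ∈ box := ae_restrict_mem hbox
  filter_upwards [h1, h2] with k hk hkb
  obtain ⟨hk1, hk2⟩ := hkb
  simp only [Set.mem_Icc] at hk1 hk2
  have hπ := Real.pi_pos
  have ha1 : Real.cos k.1 < 1 := by
    refine lt_of_le_of_ne (Real.cos_le_one _) (fun h => hk.2.1 ?_)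
    exact (Real.cos_eq_one_iff_of_lt_of_lt (by linarith [hk1.1]) (by linarith [hk1.2])).mp h
  have ha2 : -1 < Real.cos k.1 := by
    have hlt : -π < k.1 := lt_of_le_of_ne hk1.1 (Ne.symm hk.1)
    have hlt2 : k.1 < π := lt_of_le_of_ne hk1.2 hk.2.2
    have hc : 0 < Real.cos (k.1 / 2) :=
      Real.cos_pos_of_mem_Ioo ⟨by linarith, by linarith⟩
    have hsq := Real.cos_sq (k.1 / 2)
    rw [show 2 * (k.1 / 2) = k.1 by ring] at hsq
    nlinarith
  have hb1 : Real.cos k.2 ≤ 1 := Real.cos_le_one _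
  have hb2 : -1 ≤ Real.cos k.2 := Real.neg_one_le_cos _
  have hc1 : γ * Real.cos φs < 2 := by
    nlinarith [Real.neg_one_le_cos φs, Real.cos_le_one φs]
  have hc2 : -2 < γ * Real.cos φs := by
    nlinarith [Real.neg_one_le_cos φs, Real.cos_le_one φs]
  rw [D_eq]
  rcases lt_or_ge (-1 : ℝ) (Real.cos k.2) with hb | hb
  · have t1 : 0 < (2 + γ * Real.cos φs) * (1 - Real.cos k.1) * (1 + Real.cos k.2) := by
      apply mul_pos (mul_pos (by linarith) (by linarith)) (by linarith)
    have t2 : 0 ≤ (2 - γ * Real.cos φs) * (1 + Real.cos k.1) * (1 - Real.cos k.2) := by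
      apply mul_nonneg (mul_nonneg (by linarith) (by linarith)) (by linarith)
    linarith
  · have hbe : Real.cos k.2 = -1 := le_antisymm hb hb2
    rw [hbe]
    have t2 : 0 < (2 - γ * Real.cos φs) * (1 + Real.cos k.1) * (1 - (-1 : ℝ)) := by
      apply mul_pos (mul_pos (by linarith) (by linarith)) (by norm_num)
    nlinarith

end
end

section
/- For κ and Δ sufficiently small, if t₁, t₂ ∈ T_{L/B} are neighboring vectors (so the blocks τ_{t₁}(Λ_B) and τ_{t₂}(Λ_B) share a line of sites), then τ_{t₁}(G₀ ∪ G₁₈₀) ∩ τ_{t₂}(G₀ ∪ G₁₈₀) ⊆ (τ_{t₁}(G₀) ∩ τ_{t₂}(G₀)) ∪ (τ_{t₁}(G₁₈₀) ∩ τ_{t₂}(G₁₈₀)); in other words, any two neighboring good blocks are necessarily of the same type of goodness. -/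
open MeasureTheory Real Filter

noncomputable section
open scoped Classical

/-- The torus `T_L = (ℤ/L)²`. -/
abbrev Torus (L : ℕ) := ZMod L × ZMod L

/-- A spin configuration on `T_L`: at each site, an angle, i.e., a point of the circle
`ℝ/2πℤ` (parametrizing a unit two-component spin). -/
abbrev Cfg (L : ℕ) := Torus L → Real.Angle

instance : Fact ((0 : ℝ) < 2 * π) := ⟨by positivity⟩

/-- Lebesgue measure on the unit circle (total mass `2π`). -/
instance : MeasureSpace Real.Angle :=
  inferInstanceAs (MeasureSpace (AddCircle (2 * π)))

instance : SigmaFinite (volume : Measure Real.Angle) :=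
  inferInstanceAs (SigmaFinite (volume : Measure (AddCircle (2 * π))))

/-- The torus Hamiltonian `H_L` of the nnn antiferromagnet. -/
def angleH (L : ℕ) (hL : L ≠ 0) (J γ : ℝ) (θ : Cfg L) : ℝ :=
  haveI : NeZero L := ⟨hL⟩
  J * ∑ r : Torus L,
      (2 + Real.Angle.cos (θ r - θ (r + (1, 1))) + Real.Angle.cos (θ r - θ (r + (1, -1))))
    + J * γ * ∑ r : Torus L,
        (Real.Angle.cos (θ r - θ (r + (1, 0))) + Real.Angle.cos (θ r - θ (r + (0, 1))))

/-- The partition function `Z_{L,β}` (w.r.t. the product of Lebesgue measures on circles). -/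
def Zfull (L : ℕ) (hL : L ≠ 0) (β J γ : ℝ) : ℝ :=
  haveI : NeZero L := ⟨hL⟩
  ∫ θ : Cfg L, Real.exp (-(β * angleH L hL J γ θ))

/-- The torus Gibbs measure `P_{L,β}`. -/
def gibbs (L : ℕ) (hL : L ≠ 0) (β J γ : ℝ) : Measure (Cfg L) :=
  haveI : NeZero L := ⟨hL⟩
  letI μ : Measure (Cfg L) :=
    volume.withDensity fun θ => ENNReal.ofReal (Real.exp (-(β * angleH L hL J γ θ)))
  (μ Set.univ)⁻¹ • μ

/-- Translation of a configuration by `B·t`, `t ∈ T_{L/B}` (represented by a pair of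
naturals); the event `τ_t(A)` is `{θ | shiftT L B t θ ∈ A}`. -/
def shiftT (L B : ℕ) (t : ℕ × ℕ) (θ : Cfg L) : Cfg L :=
  fun r => θ (r + (((B * t.1 : ℕ) : ZMod L), ((B * t.2 : ℕ) : ZMod L)))

/-- The constrained partition function `Z_{L,β}(A)`; `A` is simultaneously enforced in
all translates of `Λ_B` by vectors from `T_{L/B}`. -/
def Zconstr (L B : ℕ) (hL : L ≠ 0) (β J γ : ℝ) (A : Set (Cfg L)) : ℝ :=
  haveI : NeZero L := ⟨hL⟩
  ∫ θ : Cfg L, Real.exp (-(β * angleH L hL J γ θ)) *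
    ∏ t ∈ Finset.range (L / B) ×ˢ Finset.range (L / B),
      (if shiftT L B t θ ∈ A then (1 : ℝ) else 0)

/-- Membership in the block `Λ_B` of `(B+1) × (B+1)` sites based at the torus origin. -/
def inBlock (L B : ℕ) (r : Torus L) : Prop := r.1.val ≤ B ∧ r.2.val ≤ B

/-- `A` is a reflection-symmetric event in `Λ_B`: it depends only on the spins in `Λ_B`
and is invariant under the reflections of `Λ_B` in the coordinate planes through the
center of `Λ_B`. -/
def IsRS (L B : ℕ) (A : Set (Cfg L)) : Prop :=
  (∀ θ θ' : Cfg L, (∀ r, inBlock L B r → θ r = θ' r) → (θ ∈ A ↔ θ' ∈ A)) ∧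
  (∀ θ : Cfg L, θ ∈ A → (fun r : Torus L => θ ((B : ZMod L) - r.1, r.2)) ∈ A) ∧
  (∀ θ : Cfg L, θ ∈ A → (fun r : Torus L => θ (r.1, (B : ZMod L) - r.2)) ∈ A)

/-- The ground-state offset determined by the overall angle `θ*` and the relative
angle `φ*` between the Néel states of the even and the odd sublattice. -/
def offset (L : ℕ) (θs φs : ℝ) (r : Torus L) : ℝ :=
  if Even r.1.val then (if Even r.2.val then θs else θs + φs + π)
  else (if Even r.2.val then θs + φs else θs + π)

/-- The deviation variables (defined from `θ` via `θ*`, `φ*`) satisfy `|ϑ_r| < Δ`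
throughout the block `Λ_B`. -/
def goodDev (L B : ℕ) (Δ θs φs : ℝ) (θ : Cfg L) : Prop :=
  ∀ r : Torus L, inBlock L B r →
    |(θ r - ((offset L θs φs r : ℝ) : Real.Angle)).toReal| < Δ

/-- The good-block event `G₀` (sublattices aligned: `|φ*| ≤ κ`). -/
def G0 (L B : ℕ) (κ Δ : ℝ) : Set (Cfg L) :=
  {θ | ∃ θs φs : ℝ, |φs| ≤ κ ∧ goodDev L B Δ θs φs θ}

/-- The good-block event `G₁₈₀` (sublattices antialigned: `|φ* - π| ≤ κ`). -/
def G180 (L B : ℕ) (κ Δ : ℝ) : Set (Cfg L) :=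
  {θ | ∃ θs φs : ℝ, |φs - π| ≤ κ ∧ goodDev L B Δ θs φs θ}

/-- The bad-block event `B = (G₀ ∪ G₁₈₀)ᶜ`. -/
def BadEv (L B : ℕ) (κ Δ : ℝ) : Set (Cfg L) := (G0 L B κ Δ ∪ G180 L B κ Δ)ᶜ

/-- The energetically bad event `B_E`: some next-nearest neighbor pair in `Λ_B` has
`||θ_r − θ_{r'}| − π| ≥ Δ/(2B)`. -/
def BE (L B : ℕ) (Δ : ℝ) : Set (Cfg L) :=
  {θ | ∃ r r' : Torus L, inBlock L B r ∧ inBlock L B r' ∧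
    (r' = r + (1, 1) ∨ r' = r + (1, -1) ∨ r = r' + (1, 1) ∨ r = r' + (1, -1)) ∧
    Δ / (2 * (B : ℝ)) ≤ abs (|(θ r - θ r').toReal| - π)}

/-- The entropically bad event `B_SW = B \ B_E`. -/
def BSW (L B : ℕ) (κ Δ : ℝ) : Set (Cfg L) := BadEv L B κ Δ \ BE L B Δ

/-- The event `B_SW^{(i)}`: the block is bad, yet for some `θ*` the deviation variables
defined via `θ*` and `φ* = φᵢ` satisfy `|ϑ_r| < Δ` on `Λ_B`. -/
def BSWi (L B : ℕ) (κ Δ φi : ℝ) : Set (Cfg L) :=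
  BadEv L B κ Δ ∩ {θ | ∃ θs : ℝ, goodDev L B Δ θs φi θ}

lemma myAbsSub (a b : ℝ) : |a - b| ≤ |a| + |b| := by
  rw [sub_eq_add_neg]
  exact (abs_add_le _ _).trans (by rw [abs_neg])

lemma abs_toReal_coe_le (x : ℝ) : |((x : ℝ) : Real.Angle).toReal| ≤ |x| := by
  obtain ⟨k, hk⟩ := Real.Angle.angle_eq_iff_two_pi_dvd_sub.1
    (Real.Angle.coe_toReal (x : Real.Angle))
  -- hk : (↑x).toReal - x = 2 * π * k
  rcases eq_or_ne k 0 with rfl | hk0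
  · simp at hk
    rw [sub_eq_zero] at hk
    rw [hk]
  · have h1 : (1 : ℝ) ≤ |(k : ℝ)| := by
      rw [← Int.cast_abs]
      exact_mod_cast Int.one_le_abs (by simpa using hk0)
    have h2 : |((x : ℝ) : Real.Angle).toReal| ≤ π := Real.Angle.abs_toReal_le_pi _
    have h3 : |x| = |((x : ℝ) : Real.Angle).toReal - 2 * π * k| := by
      rw [← hk]; ring_nf
    have h4 : 2 * π * |(k:ℝ)| - |((x : ℝ) : Real.Angle).toReal| ≤ |((x : ℝ) : Real.Angle).toReal - 2 * π * k| := by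
      have := myAbsSub (2 * π * (k:ℝ)) (((x : ℝ) : Real.Angle).toReal)
      rw [abs_sub_comm]
      have habs : |2 * π * (k:ℝ)| = 2 * π * |(k:ℝ)| := by
        rw [abs_mul, abs_of_nonneg (by positivity : (0:ℝ) ≤ 2 * π)]
      nlinarith [abs_sub_abs_le_abs_sub (2 * π * (k:ℝ)) (((x : ℝ) : Real.Angle).toReal)]
    have hpi := Real.pi_pos
    nlinarith

lemma sub_toReal_le (A B : Real.Angle) : |(A - B).toReal| ≤ |A.toReal - B.toReal| := by
  have h : A - B = ((A.toReal - B.toReal : ℝ) : Real.Angle) := by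
    rw [Real.Angle.coe_sub, Real.Angle.coe_toReal, Real.Angle.coe_toReal]
  rw [h]
  exact abs_toReal_coe_le _


lemma vertPair {L B : ℕ} [NeZero L] {Δ θs φs : ℝ} {θ : Cfg L} {t : ℕ × ℕ}
    (hg : goodDev L B Δ θs φs (shiftT L B t θ))
    (hBL : B < L) (h1L : 1 < L) (hB : 0 < B) (x : ℕ) (hx : x ≤ B) :
    ∃ s : ℝ, (s = 1 ∨ s = -1) ∧
      |(θ (((x + B * t.1 : ℕ) : ZMod L), ((1 + B * t.2 : ℕ) : ZMod L))
        - θ (((x + B * t.1 : ℕ) : ZMod L), ((B * t.2 : ℕ) : ZMod L))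
        - ((π + s * φs : ℝ) : Real.Angle)).toReal| < 2 * Δ := by
  have hvx : ((x : ZMod L)).val = x := ZMod.val_natCast_of_lt (lt_of_le_of_lt hx hBL)
  have hv1 : ((1 : ZMod L)).val = 1 := by
    rw [← Nat.cast_one, ZMod.val_natCast_of_lt h1L]
  have hin0 : inBlock L B ((x : ZMod L), (0 : ZMod L)) :=
    ⟨by simpa [hvx] using hx, by simp [ZMod.val_zero]⟩
  have hin1 : inBlock L B ((x : ZMod L), (1 : ZMod L)) :=
    ⟨by simpa [hvx] using hx, by rw [hv1]; exact hB⟩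
  have h0 := hg _ hin0
  have h1 := hg _ hin1
  have es0 : shiftT L B t θ ((x : ZMod L), (0 : ZMod L))
      = θ (((x + B * t.1 : ℕ) : ZMod L), ((B * t.2 : ℕ) : ZMod L)) := by
    show θ _ = θ _
    congr 1
    refine Prod.ext ?_ ?_ <;> simp <;> push_cast <;> ring
  have es1 : shiftT L B t θ ((x : ZMod L), (1 : ZMod L))
      = θ (((x + B * t.1 : ℕ) : ZMod L), ((1 + B * t.2 : ℕ) : ZMod L)) := by
    show θ _ = θ _
    congr 1
    refine Prod.ext ?_ ?_ <;> simp <;> push_cast <;> ring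
  have ho0 : offset L θs φs ((x : ZMod L), (0 : ZMod L))
      = if Even x then θs else θs + φs := by
    simp [offset, hvx, ZMod.val_zero]
  have ho1 : offset L θs φs ((x : ZMod L), (1 : ZMod L))
      = if Even x then θs + φs + π else θs + π := by
    simp [offset, hvx, hv1, Nat.even_iff]
  rw [← es0, ← es1]
  rcases Nat.even_or_odd x with hx2 | hx2
  · refine ⟨1, Or.inl rfl, ?_⟩
    have hdiff : (π + 1 * φs : ℝ)
        = offset L θs φs ((x : ZMod L), (1 : ZMod L))
          - offset L θs φs ((x : ZMod L), (0 : ZMod L)) := by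
      rw [ho0, ho1, if_pos hx2, if_pos hx2]; ring
    have key : shiftT L B t θ ((x : ZMod L), (1 : ZMod L))
          - shiftT L B t θ ((x : ZMod L), (0 : ZMod L))
          - ((π + 1 * φs : ℝ) : Real.Angle)
        = (shiftT L B t θ ((x : ZMod L), (1 : ZMod L))
            - ((offset L θs φs ((x : ZMod L), (1 : ZMod L)) : ℝ) : Real.Angle))
          - (shiftT L B t θ ((x : ZMod L), (0 : ZMod L))
            - ((offset L θs φs ((x : ZMod L), (0 : ZMod L)) : ℝ) : Real.Angle)) := by
      rw [hdiff, Real.Angle.coe_sub]; abel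
    rw [key]
    calc _ ≤ _ := sub_toReal_le _ _
      _ ≤ _ := myAbsSub _ _
      _ < 2 * Δ := by linarith
  · refine ⟨-1, Or.inr rfl, ?_⟩
    have hx2' : ¬ Even x := Nat.not_even_iff_odd.mpr hx2
    have hdiff : (π + (-1) * φs : ℝ)
        = offset L θs φs ((x : ZMod L), (1 : ZMod L))
          - offset L θs φs ((x : ZMod L), (0 : ZMod L)) := by
      rw [ho0, ho1, if_neg hx2', if_neg hx2']; ring
    have key : shiftT L B t θ ((x : ZMod L), (1 : ZMod L))
          - shiftT L B t θ ((x : ZMod L), (0 : ZMod L))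
          - ((π + (-1) * φs : ℝ) : Real.Angle)
        = (shiftT L B t θ ((x : ZMod L), (1 : ZMod L))
            - ((offset L θs φs ((x : ZMod L), (1 : ZMod L)) : ℝ) : Real.Angle))
          - (shiftT L B t θ ((x : ZMod L), (0 : ZMod L))
            - ((offset L θs φs ((x : ZMod L), (0 : ZMod L)) : ℝ) : Real.Angle)) := by
      rw [hdiff, Real.Angle.coe_sub]; abel
    rw [key]
    calc _ ≤ _ := sub_toReal_le _ _
      _ ≤ _ := myAbsSub _ _
      _ < 2 * Δ := by linarith

lemma horizPair {L B : ℕ} [NeZero L] {Δ θs φs : ℝ} {θ : Cfg L} {t : ℕ × ℕ}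
    (hg : goodDev L B Δ θs φs (shiftT L B t θ))
    (hBL : B < L) (h1L : 1 < L) (hB : 0 < B) (y : ℕ) (hy : y ≤ B) :
    ∃ s : ℝ, (s = 1 ∨ s = -1) ∧
      |(θ (((1 + B * t.1 : ℕ) : ZMod L), ((y + B * t.2 : ℕ) : ZMod L))
        - θ (((B * t.1 : ℕ) : ZMod L), ((y + B * t.2 : ℕ) : ZMod L))
        - ((s * φs : ℝ) : Real.Angle)).toReal| < 2 * Δ := by
  have hvy : ((y : ZMod L)).val = y := ZMod.val_natCast_of_lt (lt_of_le_of_lt hy hBL)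
  have hv1 : ((1 : ZMod L)).val = 1 := by
    rw [← Nat.cast_one, ZMod.val_natCast_of_lt h1L]
  have hin0 : inBlock L B ((0 : ZMod L), (y : ZMod L)) :=
    ⟨by simp [ZMod.val_zero], by simpa [hvy] using hy⟩
  have hin1 : inBlock L B ((1 : ZMod L), (y : ZMod L)) :=
    ⟨by rw [hv1]; exact hB, by simpa [hvy] using hy⟩
  have h0 := hg _ hin0
  have h1 := hg _ hin1
  have es0 : shiftT L B t θ ((0 : ZMod L), (y : ZMod L))
      = θ (((B * t.1 : ℕ) : ZMod L), ((y + B * t.2 : ℕ) : ZMod L)) := by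
    show θ _ = θ _
    congr 1
    refine Prod.ext ?_ ?_ <;> simp <;> push_cast <;> ring
  have es1 : shiftT L B t θ ((1 : ZMod L), (y : ZMod L))
      = θ (((1 + B * t.1 : ℕ) : ZMod L), ((y + B * t.2 : ℕ) : ZMod L)) := by
    show θ _ = θ _
    congr 1
    refine Prod.ext ?_ ?_ <;> simp <;> push_cast <;> ring
  have ho0 : offset L θs φs ((0 : ZMod L), (y : ZMod L))
      = if Even y then θs else θs + φs + π := by
    simp [offset, hvy, ZMod.val_zero]
  have ho1 : offset L θs φs ((1 : ZMod L), (y : ZMod L))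
      = if Even y then θs + φs else θs + π := by
    simp [offset, hvy, hv1, Nat.even_iff]
  rw [← es0, ← es1]
  rcases Nat.even_or_odd y with hy2 | hy2
  · refine ⟨1, Or.inl rfl, ?_⟩
    have hdiff : (1 * φs : ℝ)
        = offset L θs φs ((1 : ZMod L), (y : ZMod L))
          - offset L θs φs ((0 : ZMod L), (y : ZMod L)) := by
      rw [ho0, ho1, if_pos hy2, if_pos hy2]; ring
    have key : shiftT L B t θ ((1 : ZMod L), (y : ZMod L))
          - shiftT L B t θ ((0 : ZMod L), (y : ZMod L))
          - ((1 * φs : ℝ) : Real.Angle)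
        = (shiftT L B t θ ((1 : ZMod L), (y : ZMod L))
            - ((offset L θs φs ((1 : ZMod L), (y : ZMod L)) : ℝ) : Real.Angle))
          - (shiftT L B t θ ((0 : ZMod L), (y : ZMod L))
            - ((offset L θs φs ((0 : ZMod L), (y : ZMod L)) : ℝ) : Real.Angle)) := by
      rw [hdiff, Real.Angle.coe_sub]; abel
    rw [key]
    calc _ ≤ _ := sub_toReal_le _ _
      _ ≤ _ := myAbsSub _ _
      _ < 2 * Δ := by linarith
  · refine ⟨-1, Or.inr rfl, ?_⟩
    have hy2' : ¬ Even y := Nat.not_even_iff_odd.mpr hy2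
    have hdiff : ((-1) * φs : ℝ)
        = offset L θs φs ((1 : ZMod L), (y : ZMod L))
          - offset L θs φs ((0 : ZMod L), (y : ZMod L)) := by
      rw [ho0, ho1, if_neg hy2', if_neg hy2']; ring
    have key : shiftT L B t θ ((1 : ZMod L), (y : ZMod L))
          - shiftT L B t θ ((0 : ZMod L), (y : ZMod L))
          - (((-1) * φs : ℝ) : Real.Angle)
        = (shiftT L B t θ ((1 : ZMod L), (y : ZMod L))
            - ((offset L θs φs ((1 : ZMod L), (y : ZMod L)) : ℝ) : Real.Angle))
          - (shiftT L B t θ ((0 : ZMod L), (y : ZMod L))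
            - ((offset L θs φs ((0 : ZMod L), (y : ZMod L)) : ℝ) : Real.Angle)) := by
      rw [hdiff, Real.Angle.coe_sub]; abel
    rw [key]
    calc _ ≤ _ := sub_toReal_le _ _
      _ ≤ _ := myAbsSub _ _
      _ < 2 * Δ := by linarith

lemma pibound {u : ℝ} (hu : ((u : ℝ) : Real.Angle) = ((π : ℝ) : Real.Angle)) : π ≤ |u| := by
  have h := abs_toReal_coe_le u
  rw [hu, Real.Angle.toReal_pi] at h
  rwa [abs_of_pos Real.pi_pos] at h

lemma ctr {κ Δ x : ℝ} (hκ : κ ≤ 1/10) (hΔ : Δ ≤ 1/10)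
    (hx : |x - π| ≤ 2*κ ∨ |x + π| ≤ 2*κ)
    (h : |((x : ℝ) : Real.Angle).toReal| < 4*Δ) : False := by
  have hpi := Real.pi_gt_three
  rcases hx with hx | hx
  · have hcoe : ((((x : ℝ) : Real.Angle).toReal - (x - π) : ℝ) : Real.Angle)
        = ((π:ℝ) : Real.Angle) := by
      have e : (((x : ℝ) : Real.Angle).toReal - (x - π) : ℝ)
          = ((x : ℝ) : Real.Angle).toReal - x + π := by ring
      rw [e, Real.Angle.coe_add, Real.Angle.coe_sub, Real.Angle.coe_toReal, sub_self, zero_add]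
    have h1 := pibound hcoe
    have h2 : |((x : ℝ) : Real.Angle).toReal - (x - π)|
        ≤ |((x : ℝ) : Real.Angle).toReal| + |x - π| := myAbsSub _ _
    linarith
  · have hcoe : ((((x : ℝ) : Real.Angle).toReal - (x + π) : ℝ) : Real.Angle)
        = ((π:ℝ) : Real.Angle) := by
      have e : (((x : ℝ) : Real.Angle).toReal - (x + π) : ℝ)
          = ((x : ℝ) : Real.Angle).toReal - x + (-π) := by ring
      rw [e, Real.Angle.coe_add, Real.Angle.coe_sub, Real.Angle.coe_toReal, sub_self, zero_add,
        Real.Angle.coe_neg, Real.Angle.neg_coe_pi]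
    have h1 := pibound hcoe
    have h2 : |((x : ℝ) : Real.Angle).toReal - (x + π)|
        ≤ |((x : ℝ) : Real.Angle).toReal| + |x + π| := myAbsSub _ _
    linarith

lemma diffBound {Δ : ℝ} {L B : ℕ} [NeZero L]
    (hBL : B < L) (h1L : 1 < L) (hB : 0 < B) {t₁ t₂ : ℕ × ℕ}
    (hadj : t₂ = t₁ + (1, 0) ∨ t₂ = t₁ + (0, 1)) {θ : Cfg L} {θ₁ φ₁ θ₂ φ₂ : ℝ}
    (hg₁ : goodDev L B Δ θ₁ φ₁ (shiftT L B t₁ θ))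
    (hg₂ : goodDev L B Δ θ₂ φ₂ (shiftT L B t₂ θ)) :
    ∃ s₁ s₂ : ℝ, (s₁ = 1 ∨ s₁ = -1) ∧ (s₂ = 1 ∨ s₂ = -1) ∧
      |(((s₁ * φ₁ - s₂ * φ₂ : ℝ)) : Real.Angle).toReal| < 4 * Δ := by
  rcases hadj with rfl | rfl
  · obtain ⟨s₁, hs₁, hD₁⟩ := vertPair hg₁ hBL h1L hB B le_rfl
    obtain ⟨s₂, hs₂, hD₂⟩ := vertPair hg₂ hBL h1L hB 0 (Nat.zero_le _)
    have e1 : (0 + B * (t₁ + (1, 0)).1) = (B + B * t₁.1) := by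
      simp [Prod.fst_add]; ring
    have e2 : (1 + B * (t₁ + (1, 0)).2) = (1 + B * t₁.2) := by simp
    have e3 : (B * (t₁ + (1, 0)).2) = B * t₁.2 := by simp
    rw [e1, e2, e3] at hD₂
    refine ⟨s₁, s₂, hs₁, hs₂, ?_⟩
    have hr : (s₁ * φ₁ - s₂ * φ₂ : ℝ) = (π + s₁ * φ₁) - (π + s₂ * φ₂) := by ring
    have key : ((s₁ * φ₁ - s₂ * φ₂ : ℝ) : Real.Angle)
        = (θ (((B + B * t₁.1 : ℕ) : ZMod L), ((1 + B * t₁.2 : ℕ) : ZMod L))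
            - θ (((B + B * t₁.1 : ℕ) : ZMod L), ((B * t₁.2 : ℕ) : ZMod L))
            - ((π + s₂ * φ₂ : ℝ) : Real.Angle))
          - (θ (((B + B * t₁.1 : ℕ) : ZMod L), ((1 + B * t₁.2 : ℕ) : ZMod L))
            - θ (((B + B * t₁.1 : ℕ) : ZMod L), ((B * t₁.2 : ℕ) : ZMod L))
            - ((π + s₁ * φ₁ : ℝ) : Real.Angle)) := by
      rw [hr, Real.Angle.coe_sub]; abel
    rw [key]
    calc _ ≤ _ := sub_toReal_le _ _
      _ ≤ _ := myAbsSub _ _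
      _ < 4 * Δ := by linarith
  · obtain ⟨s₁, hs₁, hD₁⟩ := horizPair hg₁ hBL h1L hB B le_rfl
    obtain ⟨s₂, hs₂, hD₂⟩ := horizPair hg₂ hBL h1L hB 0 (Nat.zero_le _)
    have e1 : (0 + B * (t₁ + (0, 1)).2) = (B + B * t₁.2) := by
      simp [Prod.snd_add]; ring
    have e2 : (1 + B * (t₁ + (0, 1)).1) = (1 + B * t₁.1) := by simp
    have e3 : (B * (t₁ + (0, 1)).1) = B * t₁.1 := by simp
    rw [e1, e2, e3] at hD₂
    refine ⟨s₁, s₂, hs₁, hs₂, ?_⟩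
    have key : ((s₁ * φ₁ - s₂ * φ₂ : ℝ) : Real.Angle)
        = (θ (((1 + B * t₁.1 : ℕ) : ZMod L), ((B + B * t₁.2 : ℕ) : ZMod L))
            - θ (((B * t₁.1 : ℕ) : ZMod L), ((B + B * t₁.2 : ℕ) : ZMod L))
            - ((s₂ * φ₂ : ℝ) : Real.Angle))
          - (θ (((1 + B * t₁.1 : ℕ) : ZMod L), ((B + B * t₁.2 : ℕ) : ZMod L))
            - θ (((B * t₁.1 : ℕ) : ZMod L), ((B + B * t₁.2 : ℕ) : ZMod L))
            - ((s₁ * φ₁ : ℝ) : Real.Angle)) := by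
      rw [Real.Angle.coe_sub]; abel
    rw [key]
    calc _ ≤ _ := sub_toReal_le _ _
      _ ≤ _ := myAbsSub _ _
      _ < 4 * Δ := by linarith

lemma mixed {κ Δ : ℝ} (hκ : κ ≤ 1/10) (hΔ : Δ ≤ 1/10) {L B : ℕ} [NeZero L]
    (hBL : B < L) (h1L : 1 < L) (hB : 0 < B) {t₁ t₂ : ℕ × ℕ}
    (hadj : t₂ = t₁ + (1, 0) ∨ t₂ = t₁ + (0, 1)) (θ : Cfg L)
    (h : (shiftT L B t₁ θ ∈ G0 L B κ Δ ∧ shiftT L B t₂ θ ∈ G180 L B κ Δ) ∨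
         (shiftT L B t₁ θ ∈ G180 L B κ Δ ∧ shiftT L B t₂ θ ∈ G0 L B κ Δ)) : False := by
  rcases h with ⟨⟨θ₁, φ₁, hφ₁, hg₁⟩, ⟨θ₂, φ₂, hφ₂, hg₂⟩⟩ | ⟨⟨θ₁, φ₁, hφ₁, hg₁⟩, ⟨θ₂, φ₂, hφ₂, hg₂⟩⟩
  · obtain ⟨s₁, s₂, hs₁, hs₂, hlt⟩ := diffBound hBL h1L hB hadj hg₁ hg₂
    obtain ⟨ha, hb⟩ := abs_le.mp hφ₁
    obtain ⟨hc, hd⟩ := abs_le.mp hφ₂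
    refine ctr hκ hΔ ?_ hlt
    rcases hs₁ with rfl | rfl <;> rcases hs₂ with rfl | rfl <;>
      first
      | (apply Or.inl; rw [abs_le]; constructor <;> linarith)
      | (apply Or.inr; rw [abs_le]; constructor <;> linarith)
  · obtain ⟨s₁, s₂, hs₁, hs₂, hlt⟩ := diffBound hBL h1L hB hadj hg₁ hg₂
    obtain ⟨ha, hb⟩ := abs_le.mp hφ₁
    obtain ⟨hc, hd⟩ := abs_le.mp hφ₂
    refine ctr hκ hΔ ?_ hlt
    rcases hs₁ with rfl | rfl <;> rcases hs₂ with rfl | rfl <;>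
      first
      | (apply Or.inl; rw [abs_le]; constructor <;> linarith)
      | (apply Or.inr; rw [abs_le]; constructor <;> linarith)

/-- for `κ` and `Δ` sufficiently small, any two neighboring good blocks
are necessarily of the same type of goodness. -/
theorem neighboring_good_blocks_agree :
    ∃ κ₀ : ℝ, 0 < κ₀ ∧ ∃ Δ₀ : ℝ, 0 < Δ₀ ∧
      ∀ κ Δ : ℝ, 0 < κ → κ ≤ κ₀ → 0 < Δ → Δ ≤ Δ₀ →
        ∀ (L B : ℕ), L ≠ 0 → 0 < B →
          (∃ m : ℕ, 0 < m ∧ L = 2 * m * B) → 4 ∣ L →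
          ∀ t₁ t₂ : ℕ × ℕ,
            (t₂ = t₁ + (1, 0) ∨ t₂ = t₁ + (0, 1) ∨
              t₁ = t₂ + (1, 0) ∨ t₁ = t₂ + (0, 1)) →
            ∀ θ : Cfg L,
              shiftT L B t₁ θ ∈ G0 L B κ Δ ∪ G180 L B κ Δ →
              shiftT L B t₂ θ ∈ G0 L B κ Δ ∪ G180 L B κ Δ →
              (shiftT L B t₁ θ ∈ G0 L B κ Δ ∧ shiftT L B t₂ θ ∈ G0 L B κ Δ) ∨
                (shiftT L B t₁ θ ∈ G180 L B κ Δ ∧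
                  shiftT L B t₂ θ ∈ G180 L B κ Δ) := by
  refine ⟨1/10, by norm_num, 1/10, by norm_num, ?_⟩
  intro κ Δ hκ0 hκ hΔ0 hΔ L B hL0 hB hm _h4 t₁ t₂ hadj θ h₁ h₂
  haveI : NeZero L := ⟨hL0⟩
  obtain ⟨m, hm0, hLm⟩ := hm
  have h2B : 2 * B ≤ L := by
    subst hLm
    calc 2 * B = 2 * 1 * B := by ring
      _ ≤ 2 * m * B := Nat.mul_le_mul_right _ (by omega)
  have hBL : B < L := by omega
  have h1L : 1 < L := by omega
  rcases h₁ with h₁ | h₁ <;> rcases h₂ with h₂ | h₂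
  · exact Or.inl ⟨h₁, h₂⟩
  · exfalso
    rcases hadj with h | h | h | h
    · exact mixed hκ hΔ hBL h1L hB (Or.inl h) θ (Or.inl ⟨h₁, h₂⟩)
    · exact mixed hκ hΔ hBL h1L hB (Or.inr h) θ (Or.inl ⟨h₁, h₂⟩)
    · exact mixed hκ hΔ hBL h1L hB (Or.inl h) θ (Or.inr ⟨h₂, h₁⟩)
    · exact mixed hκ hΔ hBL h1L hB (Or.inr h) θ (Or.inr ⟨h₂, h₁⟩)
  · exfalso
    rcases hadj with h | h | h | h
    · exact mixed hκ hΔ hBL h1L hB (Or.inl h) θ (Or.inr ⟨h₁, h₂⟩)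
    · exact mixed hκ hΔ hBL h1L hB (Or.inr h) θ (Or.inr ⟨h₁, h₂⟩)
    · exact mixed hκ hΔ hBL h1L hB (Or.inl h) θ (Or.inl ⟨h₂, h₁⟩)
    · exact mixed hκ hΔ hBL h1L hB (Or.inr h) θ (Or.inl ⟨h₂, h₁⟩)
  · exact Or.inr ⟨h₁, h₂⟩

end
end
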